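/- arXiv:1911.09477 — 13 statements merged into one kernel-verified Lean document; each statement's English description precedes it below -/
import Mathlib

section
/- Let T be a spread-law with the empty sequence in T. Then there exists a continuous function ρ from Baire space to Baire space such that ρ(α) ∈ F_T for every α in Baire space, and ρ(α) = α for every α ∈ F_T (i.e., every nonempty spread is a retract of Baire space). -/
/-- `T` is a spread-law: a finite sequence belongs to `T` iff it has an extension
by one element that belongs to `T`. -/
def IsSpreadLaw (T : Set (List ℕ)) : Prop :=
  ∀ s : List ℕ, s ∈ T ↔ ∃ n : ℕ, s ++ [n] ∈ T

/-- The spread determined by a spread-law `T`: all points of Baire space every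
initial segment of which belongs to `T`. -/
def spread (T : Set (List ℕ)) : Set (ℕ → ℕ) :=
  {α | ∀ n : ℕ, (List.range n).map α ∈ T}

open Classical in
/-- Correct a candidate next value `a` on top of `s`. -/
noncomputable def spreadNxt (T : Set (List ℕ)) (s : List ℕ) (a : ℕ) : ℕ :=
  if s ++ [a] ∈ T then a else if h : ∃ n, s ++ [n] ∈ T then h.choose else 0

/-- The corrected initial segment of length `n`. -/
noncomputable def spreadSeg (T : Set (List ℕ)) (α : ℕ → ℕ) : ℕ → List ℕ
  | 0 => []
  | n + 1 => spreadSeg T α n ++ [spreadNxt T (spreadSeg T α n) (α n)]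

/-- The retraction. -/
noncomputable def spreadRet (T : Set (List ℕ)) (α : ℕ → ℕ) (n : ℕ) : ℕ :=
  spreadNxt T (spreadSeg T α n) (α n)

lemma spreadNxt_mem {T : Set (List ℕ)} (hT : IsSpreadLaw T) {s : List ℕ} (hs : s ∈ T) (a : ℕ) :
    s ++ [spreadNxt T s a] ∈ T := by
  unfold spreadNxt
  by_cases h : s ++ [a] ∈ T
  · simpa [h]
  · have hex : ∃ n, s ++ [n] ∈ T := (hT s).1 hs
    simpa [h, hex] using hex.choose_spec

lemma spreadSeg_mem {T : Set (List ℕ)} (hT : IsSpreadLaw T) (hne : ([] : List ℕ) ∈ T)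
    (α : ℕ → ℕ) : ∀ n, spreadSeg T α n ∈ T := by
  intro n
  induction n with
  | zero => simpa [spreadSeg]
  | succ n ih => exact spreadNxt_mem hT ih (α n)

lemma spreadSeg_eq_map (T : Set (List ℕ)) (α : ℕ → ℕ) (n : ℕ) :
    (List.range n).map (spreadRet T α) = spreadSeg T α n := by
  induction n with
  | zero => simp [spreadSeg]
  | succ n ih => simp [List.range_succ, spreadSeg, ih, spreadRet]

lemma spreadSeg_congr (T : Set (List ℕ)) {α β : ℕ → ℕ} (n : ℕ)
    (h : ∀ i < n, α i = β i) : spreadSeg T α n = spreadSeg T β n := by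
  induction n with
  | zero => rfl
  | succ n ih =>
    have h1 : ∀ i < n, α i = β i := fun i hi => h i (Nat.lt_succ_of_lt hi)
    simp [spreadSeg, ih h1, h n (Nat.lt_succ_self n)]

/-- Every nonempty spread is a retract of Baire space. -/
theorem spread_retract (T : Set (List ℕ)) (hT : IsSpreadLaw T) (hne : ([] : List ℕ) ∈ T) :
    ∃ ρ : (ℕ → ℕ) → (ℕ → ℕ),
      Continuous ρ ∧ (∀ α : ℕ → ℕ, ρ α ∈ spread T) ∧ (∀ α ∈ spread T, ρ α = α) := by
  refine ⟨spreadRet T, ?_, ?_, ?_⟩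
  · -- continuity: each coordinate depends on finitely many values
    apply continuous_pi
    intro n
    have key : (fun α => spreadRet T α n) =
        (fun v : Fin (n + 1) → ℕ =>
          spreadRet T (fun i => if h : i < n + 1 then v ⟨i, h⟩ else 0) n) ∘
        (fun α (i : Fin (n + 1)) => α i) := by
      funext α
      simp only [Function.comp]
      unfold spreadRet
      have hseg : spreadSeg T (fun i => if h : i < n + 1 then α i else 0) n
          = spreadSeg T α n := by
        apply spreadSeg_congr
        intro i hi
        simp [Nat.lt_succ_of_lt hi]
      rw [hseg]
      simp
    rw [key]
    exact Continuous.comp continuous_of_discreteTopology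
      (continuous_pi fun i => continuous_apply _)
  · intro α n
    rw [spreadSeg_eq_map]
    exact spreadSeg_mem hT hne α n
  · intro α hα
    funext n
    have hseg : ∀ m, spreadSeg T α m = (List.range m).map α := by
      intro m
      induction m with
      | zero => simp [spreadSeg]
      | succ m ih =>
        have hm : (List.range (m + 1)).map α ∈ T := hα (m + 1)
        rw [List.range_succ, List.map_append] at hm; simp only [List.map_cons, List.map_nil] at hm
        simp only [spreadSeg, ih]
        have : spreadNxt T ((List.range m).map α) (α m) = α m := by
          simp [spreadNxt, hm]
        rw [this]
        simp [List.range_succ]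
    unfold spreadRet
    have hm : (List.range (n + 1)).map α ∈ T := hα (n + 1)
    rw [List.range_succ, List.map_append] at hm; simp only [List.map_cons, List.map_nil] at hm
    rw [hseg n]
    simp [spreadNxt, hm]
end

section
/- For every n : ℕ and every α ∈ T_n, α is an isolated point of T_n if and only if there exists m with α(m) + 1 = n. -/
/-- The toy spread `T_n`. -/
def toy (n : ℕ) : Set (ℕ → ℕ) :=
  {α | ∀ i : ℕ, α i ≤ α (i + 1) ∧ α i < n}

/-- `α` is an isolated point of `F`. -/
def IsolatedPt (F : Set (ℕ → ℕ)) (α : ℕ → ℕ) : Prop :=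
  α ∈ F ∧ ∃ U ∈ nhds α, U ∩ F = {α}

lemma toy_mono {n : ℕ} {α : ℕ → ℕ} (h : α ∈ toy n) : Monotone α :=
  monotone_nat_of_le_succ fun i => (h i).1

theorem isolated_toy_iff (n : ℕ) (α : ℕ → ℕ) (hα : α ∈ toy n) :
    IsolatedPt (toy n) α ↔ ∃ m : ℕ, α m + 1 = n := by
  constructor
  · rintro ⟨-, U, hU, hUF⟩
    by_contra h
    push_neg at h
    have hlt : ∀ m, α m + 1 < n := fun m => lt_of_le_of_ne (hα m).2 (h m)
    rw [nhds_pi, Filter.mem_pi] at hU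
    obtain ⟨I, hIfin, t, ht, hsub⟩ := hU
    obtain ⟨N, hN⟩ := hIfin.bddAbove
    set β : ℕ → ℕ := fun i => if i ≤ N then α i else α (N + 1) + 1 with hβ
    have hβtoy : β ∈ toy n := by
      intro i
      constructor
      · by_cases h1 : i + 1 ≤ N
        · simp only [hβ, if_pos h1, if_pos (Nat.le_of_succ_le h1)]
          exact (hα i).1
        · by_cases h2 : i ≤ N
          · simp only [hβ, if_pos h2, if_neg h1]
            exact le_trans (toy_mono hα (by omega : i ≤ N + 1)) (Nat.le_succ _)
          · simp [hβ, if_neg h1, if_neg h2]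
      · by_cases h2 : i ≤ N
        · simp only [hβ, if_pos h2]; exact (hα i).2
        · simp only [hβ, if_neg h2]; exact hlt (N + 1)
    have hβU : β ∈ U := by
      apply hsub
      intro i hi
      have : i ≤ N := hN hi
      simp only [hβ, if_pos this]
      exact mem_of_mem_nhds (ht i)
    have : β = α := by
      have : β ∈ U ∩ toy n := ⟨hβU, hβtoy⟩
      rwa [hUF] at this
    have := congrFun this (N + 1)
    simp only [hβ, if_neg (by omega : ¬ N + 1 ≤ N)] at this
    omega
  · rintro ⟨m, hm⟩
    refine ⟨hα, Set.pi (Set.Iic m) (fun i => {α i}), ?_, ?_⟩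
    · exact set_pi_mem_nhds (Set.finite_Iic m)
        (fun i _ => by rw [nhds_discrete]; exact rfl)
    · ext β
      constructor
      · rintro ⟨hβpi, hβtoy⟩
        have hle : ∀ i ≤ m, β i = α i := fun i hi => hβpi i hi
        have key : ∀ i, m ≤ i → β i = α m := by
          intro i hi
          have h1 : β m ≤ β i := toy_mono hβtoy hi
          have h2 : β i < n := (hβtoy i).2
          have := hle m le_rfl
          omega
        have keyα : ∀ i, m ≤ i → α i = α m := by
          intro i hi
          have h1 : α m ≤ α i := toy_mono hα hi
          have h2 : α i < n := (hα i).2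
          omega
        funext i
        by_cases hi : i ≤ m
        · exact hle i hi
        · rw [key i (by omega), keyα i (by omega)]
      · rintro rfl
        exact ⟨fun i _ => rfl, hα⟩
end

section
/- For every n : ℕ, the set of limit points (accumulation points) of T_{n+1} in Baire space equals T_n. -/
/-- The derived set (set of limit/accumulation points) of `F` in Baire space. -/
def dSet (F : Set (ℕ → ℕ)) : Set (ℕ → ℕ) :=
  {α | ∀ U ∈ nhds α, ∃ β ∈ F, β ∈ U ∧ β ≠ α}

lemma cyl_mem (α : ℕ → ℕ) (k : ℕ) :
    {β : ℕ → ℕ | ∀ j ≤ k, β j = α j} ∈ nhds α := by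
  have h : {β : ℕ → ℕ | ∀ j ≤ k, β j = α j} =
      ⋂ j ∈ Finset.range (k + 1), (fun β : ℕ → ℕ => β j) ⁻¹' {α j} := by
    ext β; simp [Nat.lt_succ_iff]
  rw [h]
  refine (Filter.biInter_finset_mem _).2 fun j _ => ?_
  exact (continuous_apply j).continuousAt.preimage_mem_nhds
    (IsOpen.mem_nhds (isOpen_discrete _) rfl)

theorem dSet_toy (n : ℕ) : dSet (toy (n + 1)) = toy n := by
  ext α
  constructor
  · intro h
    have h1 : ∀ i, α i ≤ α (i + 1) ∧ α i ≤ n := by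
      intro i
      obtain ⟨β, hβ, hβU, -⟩ := h _ (cyl_mem α (i + 1))
      have e0 := hβU i (by omega)
      have e1 := hβU (i + 1) le_rfl
      refine ⟨?_, ?_⟩
      · rw [← e0, ← e1]; exact (hβ i).1
      · rw [← e0]; exact Nat.lt_succ_iff.1 (hβ i).2
    intro i
    refine ⟨(h1 i).1, ?_⟩
    by_contra hlt
    have hin : α i = n := le_antisymm (h1 i).2 (not_lt.1 hlt)
    have hmono : Monotone α := monotone_nat_of_le_succ fun j => (h1 j).1
    have hαn : ∀ j, i ≤ j → α j = n := fun j hj =>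
      le_antisymm (h1 j).2 (hin ▸ hmono hj)
    obtain ⟨β, hβ, hβU, hne⟩ := h _ (cyl_mem α i)
    apply hne
    have hβmono : Monotone β := monotone_nat_of_le_succ fun j => (hβ j).1
    funext j
    rcases le_or_gt j i with hji | hij
    · exact hβU j hji
    · have hβn : β j = n := le_antisymm (Nat.lt_succ_iff.1 (hβ j).2)
        (by have hb := hβmono hij.le; rw [hβU i le_rfl, hin] at hb; exact hb)
      rw [hβn, hαn j hij.le]
  · intro hα U hU
    rw [nhds_pi, Filter.mem_pi] at hU
    obtain ⟨I, hI, t, ht, hsub⟩ := hU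
    obtain ⟨k, hk⟩ := hI.bddAbove
    set β : ℕ → ℕ := fun j => if j ≤ k then α j else n with hβdef
    have hβtoy : β ∈ toy (n + 1) := by
      intro j
      constructor
      · by_cases hj : j + 1 ≤ k
        · simp [hβdef, hj, Nat.le_of_succ_le hj, (hα j).1]
        · by_cases hj' : j ≤ k
          · simp [hβdef, hj, hj', (hα j).2.le]
          · simp [hβdef, hj, hj']
      · by_cases hj : j ≤ k
        · simpa [hβdef, hj] using Nat.lt_succ_of_lt (hα j).2
        · simp [hβdef, hj, Nat.lt_succ_self n]
    refine ⟨β, hβtoy, hsub ?_, ?_⟩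
    · intro j hj
      have hjk : j ≤ k := hk hj
      have hb : β j = α j := by simp [hβdef, hjk]
      rw [hb]
      have htj := ht j
      rw [nhds_discrete] at htj
      simpa using htj
    · intro he
      have hc : β (k + 1) = α (k + 1) := congrFun he (k + 1)
      simp [hβdef] at hc
      exact absurd hc.symm (hα (k + 1)).2.ne
end

section
/- For every m : ℕ, there exists a continuous bijection from the disjoint sum T_m ⊎ T_{m+1} onto T_{m+1} (both regarded as subspaces of Baire space). -/
/-- `⟨i⟩∗X`: the set of sequences beginning with `i` whose tail lies in `X`. -/
def consSet (i : ℕ) (X : Set (ℕ → ℕ)) : Set (ℕ → ℕ) :=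
  {β | β 0 = i ∧ (fun k => β (k + 1)) ∈ X}

/-- The disjoint sum `F ⊎ G` of two subsets of Baire space. -/
def disjSum (F G : Set (ℕ → ℕ)) : Set (ℕ → ℕ) :=
  consSet 0 F ∪ consSet 1 G

/-- The underlying map on Baire space. -/
def Fmap : (ℕ → ℕ) → (ℕ → ℕ) :=
  fun x k => if x 0 = 0 then x (k + 1) + 1 else if k = 0 then 0 else x k

lemma toy_mono_s5 {n : ℕ} {γ : ℕ → ℕ} (h : γ ∈ toy n) : ∀ k, γ 0 ≤ γ k := by
  intro k
  induction k with
  | zero => exact le_rfl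
  | succ k ih => exact ih.trans (h k).1

lemma Fmap_mem {m : ℕ} {x : ℕ → ℕ} (hx : x ∈ disjSum (toy m) (toy (m + 1))) :
    Fmap x ∈ toy (m + 1) := by
  rcases hx with ⟨h0, ht⟩ | ⟨h0, ht⟩
  · intro i
    have h1 : x (i + 1) ≤ x (i + 1 + 1) := (ht i).1
    have h2 : x (i + 1) < m := (ht i).2
    simp only [Fmap, h0, if_pos rfl, if_true]
    constructor <;> omega
  · have hne : ¬ x 0 = 0 := by omega
    intro i
    simp only [Fmap, if_neg hne]
    cases i with
    | zero => simp
    | succ i =>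
      simp only [Nat.succ_ne_zero, if_false]
      exact ⟨(ht i).1, (ht i).2⟩

lemma Fmap_cont : Continuous Fmap := by
  apply continuous_pi
  intro k
  apply Continuous.if
  · intro a ha
    have hcl : IsClopen {x : ℕ → ℕ | x 0 = 0} := by
      have h : {x : ℕ → ℕ | x 0 = 0} = (fun x : ℕ → ℕ => x 0) ⁻¹' {0} := rfl
      rw [h]
      exact (isClopen_discrete {0}).preimage (continuous_apply 0)
    rw [hcl.frontier_eq] at ha
    exact absurd ha (Set.notMem_empty a)
  · exact (continuous_apply (k + 1)).add (continuous_const : Continuous fun _ : ℕ → ℕ => (1 : ℕ))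
  · by_cases hk : k = 0
    · simpa [hk] using continuous_const
    · simpa only [if_neg hk] using continuous_apply k

theorem toy_disjSum_succ_equiv (m : ℕ) :
    ∃ f : (disjSum (toy m) (toy (m + 1))) → (toy (m + 1)),
      Continuous f ∧ Function.Bijective f := by
  refine ⟨fun x => ⟨Fmap x.1, Fmap_mem x.2⟩, ?_, ?_, ?_⟩
  · exact Continuous.subtype_mk (Fmap_cont.comp continuous_subtype_val) _
  · -- injective
    rintro ⟨x, hx⟩ ⟨y, hy⟩ hxy
    have hco : ∀ k, Fmap x k = Fmap y k :=
      fun k => congrFun (congrArg Subtype.val hxy) k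
    apply Subtype.ext
    show x = y
    rcases hx with ⟨hx0, hxt⟩ | ⟨hx0, hxt⟩ <;> rcases hy with ⟨hy0, hyt⟩ | ⟨hy0, hyt⟩
    · funext k
      cases k with
      | zero => rw [hx0, hy0]
      | succ k =>
        have := hco k
        simp [Fmap, hx0, hy0] at this
        exact this
    · exfalso
      have := hco 0
      have hy0' : ¬ y 0 = 0 := by omega
      simp [Fmap, hx0, hy0'] at this
    · exfalso
      have := hco 0
      have hx0' : ¬ x 0 = 0 := by omega
      simp [Fmap, hy0, hx0'] at this
    · funext k
      have hx0' : ¬ x 0 = 0 := by omega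
      have hy0' : ¬ y 0 = 0 := by omega
      cases k with
      | zero => rw [hx0, hy0]
      | succ k =>
        have := hco (k + 1)
        simp [Fmap, hx0', hy0'] at this
        exact this
  · -- surjective
    rintro ⟨γ, hγ⟩
    by_cases h0 : γ 0 = 0
    · -- from branch 1: x = 1 ⌢ (tail of γ)
      refine ⟨⟨fun k => if k = 0 then 1 else γ k, Or.inr ⟨rfl, ?_⟩⟩, ?_⟩
      · intro i
        simp only [Nat.succ_ne_zero, if_false]
        exact hγ (i + 1)
      · apply Subtype.ext
        funext k
        show Fmap (fun k => if k = 0 then 1 else γ k) k = γ k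
        have hne : ¬ (if (0 : ℕ) = 0 then (1 : ℕ) else γ 0) = 0 := by simp
        simp only [Fmap, if_neg hne]
        cases k with
        | zero => simp [h0]
        | succ k => simp
    · -- γ 0 ≥ 1: from branch 0
      have hpos : ∀ k, 1 ≤ γ k := fun k => le_trans (by omega) (toy_mono_s5 hγ k)
      refine ⟨⟨fun k => if k = 0 then 0 else γ (k - 1) - 1, Or.inl ⟨rfl, ?_⟩⟩, ?_⟩
      · intro i
        show (if i + 1 = 0 then 0 else γ (i + 1 - 1) - 1) ≤
            (if i + 1 + 1 = 0 then 0 else γ (i + 1 + 1 - 1) - 1) ∧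
            (if i + 1 = 0 then 0 else γ (i + 1 - 1) - 1) < m
        have h1 := (hγ i).1
        have h2 := (hγ i).2
        have h3 := hpos i
        have h4 := hpos (i + 1)
        simp only [Nat.succ_ne_zero, if_false, Nat.add_sub_cancel]
        constructor <;> omega
      · apply Subtype.ext
        funext k
        show Fmap (fun k => if k = 0 then 0 else γ (k - 1) - 1) k = γ k
        have h := hpos k
        simp only [Fmap, if_pos rfl, if_true, Nat.succ_ne_zero, if_false, Nat.add_sub_cancel]
        omega
end

section
/- For every k : ℕ and every finite sequence s of natural numbers of length k, there exist m, n : ℕ and a continuous bijection from T_s onto n ⊗ T_m (both regarded as subspaces of Baire space). -/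
/-- `T_s` for a finite sequence `s`. -/
def toySeq (s : List ℕ) : Set (ℕ → ℕ) :=
  ⋃ i : Fin s.length, consSet i (toy (s.get i))

/-- `n ⊗ T_m`. -/
def nOtimes (n m : ℕ) : Set (ℕ → ℕ) :=
  ⋃ i < n, consSet i (toy m)

namespace ToyAux

abbrev Baire := ℕ → ℕ

def Xset (k : ℕ) (f : Fin k → ℕ) : Set Baire := ⋃ i : Fin k, consSet i (toy (f i))

def CB (X Y : Set Baire) : Prop := ∃ g : X → Y, Continuous g ∧ Function.Bijective g

lemma CB_refl (X : Set Baire) : CB X X := ⟨id, continuous_id, Function.bijective_id⟩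

lemma CB_of_eq {X Y : Set Baire} (h : X = Y) : CB X Y := h ▸ CB_refl X

lemma CB_trans {X Y Z : Set Baire} (h1 : CB X Y) (h2 : CB Y Z) : CB X Z := by
  obtain ⟨f, hf, hfb⟩ := h1; obtain ⟨g, hg, hgb⟩ := h2
  exact ⟨g ∘ f, hg.comp hf, hgb.comp hfb⟩

lemma toy_mono {α : Baire} {c : ℕ} (h : α ∈ toy c) : Monotone α :=
  monotone_nat_of_le_succ (fun n => (h n).1)

lemma cb_of (X Y : Set Baire) (F G : Baire → Baire) (hF : Continuous F)
    (hXY : ∀ β ∈ X, F β ∈ Y) (hYX : ∀ δ ∈ Y, G δ ∈ X)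
    (hGF : ∀ β ∈ X, G (F β) = β) (hFG : ∀ δ ∈ Y, F (G δ) = δ) : CB X Y := by
  refine ⟨fun x => ⟨F x, hXY x x.2⟩, (hF.comp continuous_subtype_val).subtype_mk _, ?_, ?_⟩
  · intro x y h
    have h' : F (x : Baire) = F (y : Baire) := congrArg Subtype.val h
    have : (x : Baire) = y := by rw [← hGF x x.2, ← hGF y y.2, h']
    exact Subtype.ext this
  · intro y
    exact ⟨⟨G y, hYX y y.2⟩, Subtype.ext (hFG y y.2)⟩

lemma cont_coord5 (h : ℕ → ℕ → ℕ → ℕ → ℕ → ℕ) (i j l p q : ℕ) :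
    Continuous fun β : Baire => h (β i) (β j) (β l) (β p) (β q) := by
  have h1 : Continuous fun β : Baire => ((((β i, β j), β l), β p), β q) :=
    ((((continuous_apply i).prodMk (continuous_apply j)).prodMk
      (continuous_apply l)).prodMk (continuous_apply p)).prodMk (continuous_apply q)
  exact (continuous_of_discreteTopology
    (f := fun x : (((ℕ × ℕ) × ℕ) × ℕ) × ℕ => h x.1.1.1.1 x.1.1.1.2 x.1.1.2 x.1.2 x.2)).comp h1

lemma mem_Xset {k : ℕ} {f : Fin k → ℕ} {β : Baire} :
    β ∈ Xset k f ↔ ∃ i : Fin k, β 0 = ↑i ∧ (fun n => β (n + 1)) ∈ toy (f i) := by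
  simp [Xset, consSet, Set.mem_iUnion, Set.mem_setOf_eq]

lemma cons_succ' {k : ℕ} (a : ℕ) (t : Fin k → ℕ) (j : ℕ) (h : j + 1 < k + 1) :
    (Fin.cons a t : Fin (k+1) → ℕ) ⟨j + 1, h⟩ = t ⟨j, by omega⟩ := by
  have e : (⟨j + 1, h⟩ : Fin (k + 1)) = Fin.succ ⟨j, by omega⟩ := rfl
  rw [e, Fin.cons_succ]

lemma cons_zero' {k : ℕ} (a : ℕ) (t : Fin k → ℕ) (h : 0 < k + 1) :
    (Fin.cons a t : Fin (k+1) → ℕ) ⟨0, h⟩ = a := by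
  have e : (⟨0, h⟩ : Fin (k + 1)) = 0 := rfl
  rw [e, Fin.cons_zero]


lemma ix1 (m : ℕ) : m + 1 + 1 = m + 2 := rfl
lemma ix2 (m : ℕ) : m + 2 - 1 = m + 1 := rfl
lemma ix3 (m : ℕ) : m + 1 - 1 = m := rfl
lemma ix4 (m : ℕ) : m + 2 + 1 = m + 3 := rfl
lemma ix5 (m : ℕ) : m + 1 + 2 = m + 3 := rfl
lemma ix6 (m : ℕ) : m + 3 - 1 = m + 2 := rfl
lemma ix7 (m : ℕ) : m + 2 + 2 = m + 4 := rfl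

lemma Xset_cases {k : ℕ} {f : Fin k → ℕ} {β : Baire} (hβ : β ∈ Xset k f) :
    ∃ (j : ℕ) (hj : j < k), β 0 = j ∧ ∀ i, β (i+1) ≤ β (i+2) ∧ β (i+1) < f ⟨j, hj⟩ := by
  obtain ⟨i, h0, ht⟩ := mem_Xset.1 hβ
  exact ⟨i.val, i.isLt, h0, fun n => ht n⟩

lemma Xset_intro {k : ℕ} {f : Fin k → ℕ} {β : Baire} (j : ℕ) (hj : j < k) (h0 : β 0 = j)
    (ht : ∀ i, β (i+1) ≤ β (i+2) ∧ β (i+1) < f ⟨j, hj⟩) : β ∈ Xset k f :=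
  mem_Xset.2 ⟨⟨j, hj⟩, h0, fun i => ht i⟩

def mergeF : Baire → Baire := fun β n =>
  if β 0 = 0 then (if n = 0 then 0 else β n + 1)
  else if β 0 = 1 then (if n ≤ 1 then 0 else β (n - 1))
  else (if n = 0 then β 0 - 1 else β n)

def mergeG : Baire → Baire := fun δ n =>
  if δ 0 = 0 then
    (if δ 1 = 0 then (if n = 0 then 1 else δ (n + 1))
     else (if n = 0 then 0 else δ n - 1))
  else (if n = 0 then δ 0 + 1 else δ n)

lemma cont_mergeF : Continuous mergeF := by
  apply continuous_pi; intro n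
  exact cont_coord5 (fun x y z w v =>
    if x = 0 then (if n = 0 then 0 else z + 1)
    else if x = 1 then (if n ≤ 1 then 0 else v)
    else (if n = 0 then x - 1 else z)) 0 1 n (n+1) (n-1)

lemma cont_mergeG : Continuous mergeG := by
  apply continuous_pi; intro n
  exact cont_coord5 (fun x y z w v =>
    if x = 0 then
      (if y = 0 then (if n = 0 then 1 else w)
       else (if n = 0 then 0 else z - 1))
    else (if n = 0 then x + 1 else z)) 0 1 n (n+1) (n-1)


lemma tail_ge {δ : Baire} {c : ℕ} (ht : ∀ i, δ (i+1) ≤ δ (i+2) ∧ δ (i+1) < c) :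
    ∀ i, δ 1 ≤ δ (i+1) := by
  intro i; induction i with
  | zero => exact le_refl _
  | succ i ih => exact le_trans ih (ht i).1

lemma frontmerge (k : ℕ) (g : Fin k → ℕ) (c : ℕ) :
    CB (Xset (k+2) (Fin.cons c (Fin.cons (c+1) g))) (Xset (k+1) (Fin.cons (c+1) g)) := by
  apply cb_of _ _ mergeF mergeG cont_mergeF
  · -- F maps into Y
    intro β hβ
    obtain ⟨j, hj, h0, ht⟩ := Xset_cases hβ
    rcases j with _ | _ | j
    · have h0' : β 0 = 0 := h0
      have ht' : ∀ i, β (i+1) ≤ β (i+2) ∧ β (i+1) < c := ht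
      refine Xset_intro 0 (by omega) (by simp [mergeF, h0']) ?_
      intro i
      have e : (Fin.cons (c+1) g : Fin (k+1) → ℕ) ⟨0, by omega⟩ = c + 1 := rfl
      rw [e]
      have A := ht' i
      simp [mergeF, h0', ix1, ix2]
      omega
    · have h0' : β 0 = 1 := h0
      have ht' : ∀ i, β (i+1) ≤ β (i+2) ∧ β (i+1) < c + 1 := ht
      refine Xset_intro 0 (by omega) (by simp [mergeF, h0']) ?_
      intro i
      have e : (Fin.cons (c+1) g : Fin (k+1) → ℕ) ⟨0, by omega⟩ = c + 1 := rfl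
      rw [e]
      rcases i with _ | i
      · simp [mergeF, h0']
      · have A := ht' i
        simp [mergeF, h0', ix1, ix2, ix3, ix4, ix5, ix6]
        omega
    · have h0' : β 0 = j + 2 := h0
      have ht' : ∀ i, β (i+1) ≤ β (i+2) ∧ β (i+1) < g ⟨j, by omega⟩ := ht
      refine Xset_intro (j+1) (by omega) (by simp [mergeF, h0']) ?_
      intro i
      have e : (Fin.cons (c+1) g : Fin (k+1) → ℕ) ⟨j+1, by omega⟩ = g ⟨j, by omega⟩ := rfl
      rw [e]
      have A := ht' i
      simp [mergeF, h0']
      omega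
  · -- G maps back into X
    intro δ hδ
    obtain ⟨j, hj, h0, ht⟩ := Xset_cases hδ
    rcases j with _ | j
    · have h0' : δ 0 = 0 := h0
      have ht' : ∀ i, δ (i+1) ≤ δ (i+2) ∧ δ (i+1) < c + 1 := ht
      by_cases h1 : δ 1 = 0
      · refine Xset_intro 1 (by omega) (by simp [mergeG, h0', h1]) ?_
        intro i
        have e : (Fin.cons c (Fin.cons (c+1) g) : Fin (k+2) → ℕ) ⟨1, by omega⟩ = c + 1 := rfl
        rw [e]
        have A := ht' (i+1)
        simp only [ix1, ix5] at A
        simp [mergeG, h0', h1, ix1, ix2, ix4, ix5, ix6]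
        omega
      · refine Xset_intro 0 (by omega) (by simp [mergeG, h0', h1]) ?_
        intro i
        have e : (Fin.cons c (Fin.cons (c+1) g) : Fin (k+2) → ℕ) ⟨0, by omega⟩ = c := rfl
        rw [e]
        have A := ht' i
        have B := tail_ge ht' i
        have B2 := tail_ge ht' (i+1)
        simp [mergeG, h0', h1, ix1, ix2]
        omega
    · have h0' : δ 0 = j + 1 := h0
      have ht' : ∀ i, δ (i+1) ≤ δ (i+2) ∧ δ (i+1) < g ⟨j, by omega⟩ := ht
      refine Xset_intro (j+2) (by omega) (by simp [mergeG, h0']) ?_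
      intro i
      have e : (Fin.cons c (Fin.cons (c+1) g) : Fin (k+2) → ℕ) ⟨j+2, by omega⟩ = g ⟨j, by omega⟩ := rfl
      rw [e]
      have A := ht' i
      simp [mergeG, h0']
      omega
  · -- G ∘ F = id
    intro β hβ
    obtain ⟨j, hj, h0, ht⟩ := Xset_cases hβ
    funext n
    rcases j with _ | _ | j
    · have h0' : β 0 = 0 := h0
      rcases n with _ | n
      · simp [mergeF, mergeG, h0']
      · simp [mergeF, mergeG, h0', ix3]
    · have h0' : β 0 = 1 := h0
      rcases n with _ | n
      · simp [mergeF, mergeG, h0']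
      · simp [mergeF, mergeG, h0', ix3]
    · have h0' : β 0 = j + 2 := h0
      rcases n with _ | n
      · simp [mergeF, mergeG, h0']
      · simp [mergeF, mergeG, h0']
  · -- F ∘ G = id
    intro δ hδ
    obtain ⟨j, hj, h0, ht⟩ := Xset_cases hδ
    funext n
    rcases j with _ | j
    · have h0' : δ 0 = 0 := h0
      have ht' : ∀ i, δ (i+1) ≤ δ (i+2) ∧ δ (i+1) < c + 1 := ht
      by_cases h1 : δ 1 = 0
      · rcases n with _ | _ | n
        · simp [mergeF, mergeG, h0', h1]
        · simp [mergeF, mergeG, h0', h1]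
        · simp [mergeF, mergeG, h0', h1, ix1, ix2]
      · rcases n with _ | n
        · simp [mergeF, mergeG, h0', h1]
        · have B := tail_ge ht' n
          simp [mergeF, mergeG, h0', h1]
          omega
    · have h0' : δ 0 = j + 1 := h0
      rcases n with _ | n
      · simp [mergeF, mergeG, h0']
      · simp [mergeF, mergeG, h0']


def splitF : Baire → Baire := fun β n =>
  if β 0 = 0 then β n
  else if β 0 = 1 then
    (if β 1 = 0 then (if n = 0 then 2 else β (n + 1))
     else (if n = 0 then 1 else β n - 1))
  else (if n = 0 then β 0 + 1 else β n)

def splitG : Baire → Baire := fun δ n =>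
  if δ 0 = 0 then δ n
  else if δ 0 = 1 then (if n = 0 then 1 else δ n + 1)
  else if δ 0 = 2 then (if n = 0 then 1 else if n = 1 then 0 else δ (n - 1))
  else (if n = 0 then δ 0 - 1 else δ n)

lemma cont_splitF : Continuous splitF := by
  apply continuous_pi; intro n
  exact cont_coord5 (fun x y z w v =>
    if x = 0 then z
    else if x = 1 then
      (if y = 0 then (if n = 0 then 2 else w)
       else (if n = 0 then 1 else z - 1))
    else (if n = 0 then x + 1 else z)) 0 1 n (n+1) (n-1)

lemma cont_splitG : Continuous splitG := by
  apply continuous_pi; intro n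
  exact cont_coord5 (fun x y z w v =>
    if x = 0 then z
    else if x = 1 then (if n = 0 then 1 else z + 1)
    else if x = 2 then (if n = 0 then 1 else if n = 1 then 0 else v)
    else (if n = 0 then x - 1 else z)) 0 1 n (n+1) (n-1)

lemma split2 (k : ℕ) (g : Fin k → ℕ) (a c : ℕ) :
    CB (Xset (k+2) (Fin.cons a (Fin.cons (c+1) g)))
       (Xset (k+3) (Fin.cons a (Fin.cons c (Fin.cons (c+1) g)))) := by
  apply cb_of _ _ splitF splitG cont_splitF
  · intro β hβ
    obtain ⟨j, hj, h0, ht⟩ := Xset_cases hβ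
    rcases j with _ | _ | j
    · have h0' : β 0 = 0 := h0
      have ht' : ∀ i, β (i+1) ≤ β (i+2) ∧ β (i+1) < a := ht
      refine Xset_intro 0 (by omega) (by simp [splitF, h0']) ?_
      intro i
      have e : (Fin.cons a (Fin.cons c (Fin.cons (c+1) g)) : Fin (k+3) → ℕ) ⟨0, by omega⟩ = a := rfl
      rw [e]
      have A := ht' i
      simp [splitF, h0']
      omega
    · have h0' : β 0 = 1 := h0
      have ht' : ∀ i, β (i+1) ≤ β (i+2) ∧ β (i+1) < c + 1 := ht
      by_cases h1 : β 1 = 0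
      · refine Xset_intro 2 (by omega) (by simp [splitF, h0', h1]) ?_
        intro i
        have e : (Fin.cons a (Fin.cons c (Fin.cons (c+1) g)) : Fin (k+3) → ℕ) ⟨2, by omega⟩ = c + 1 := rfl
        rw [e]
        have A := ht' (i+1)
        simp only [ix1, ix5] at A
        simp [splitF, h0', h1, ix1, ix2, ix4, ix5, ix6]
        omega
      · refine Xset_intro 1 (by omega) (by simp [splitF, h0', h1]) ?_
        intro i
        have e : (Fin.cons a (Fin.cons c (Fin.cons (c+1) g)) : Fin (k+3) → ℕ) ⟨1, by omega⟩ = c := rfl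
        rw [e]
        have A := ht' i
        have B := tail_ge ht' i
        have B2 := tail_ge ht' (i+1)
        simp [splitF, h0', h1, ix1, ix2]
        omega
    · have h0' : β 0 = j + 2 := h0
      have ht' : ∀ i, β (i+1) ≤ β (i+2) ∧ β (i+1) < g ⟨j, by omega⟩ := ht
      refine Xset_intro (j+3) (by omega) (by simp [splitF, h0']) ?_
      intro i
      have e : (Fin.cons a (Fin.cons c (Fin.cons (c+1) g)) : Fin (k+3) → ℕ) ⟨j+3, by omega⟩ = g ⟨j, by omega⟩ := rfl
      rw [e]
      have A := ht' i
      simp [splitF, h0']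
      omega
  · intro δ hδ
    obtain ⟨j, hj, h0, ht⟩ := Xset_cases hδ
    rcases j with _ | _ | _ | j
    · have h0' : δ 0 = 0 := h0
      have ht' : ∀ i, δ (i+1) ≤ δ (i+2) ∧ δ (i+1) < a := ht
      refine Xset_intro 0 (by omega) (by simp [splitG, h0']) ?_
      intro i
      have e : (Fin.cons a (Fin.cons (c+1) g) : Fin (k+2) → ℕ) ⟨0, by omega⟩ = a := rfl
      rw [e]
      have A := ht' i
      simp [splitG, h0']
      omega
    · have h0' : δ 0 = 1 := h0
      have ht' : ∀ i, δ (i+1) ≤ δ (i+2) ∧ δ (i+1) < c := ht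
      refine Xset_intro 1 (by omega) (by simp [splitG, h0']) ?_
      intro i
      have e : (Fin.cons a (Fin.cons (c+1) g) : Fin (k+2) → ℕ) ⟨1, by omega⟩ = c + 1 := rfl
      rw [e]
      have A := ht' i
      simp [splitG, h0', ix1, ix2]
      omega
    · have h0' : δ 0 = 2 := h0
      have ht' : ∀ i, δ (i+1) ≤ δ (i+2) ∧ δ (i+1) < c + 1 := ht
      refine Xset_intro 1 (by omega) (by simp [splitG, h0']) ?_
      intro i
      have e : (Fin.cons a (Fin.cons (c+1) g) : Fin (k+2) → ℕ) ⟨1, by omega⟩ = c + 1 := rfl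
      rw [e]
      rcases i with _ | i
      · simp [splitG, h0']
      · have A := ht' i
        simp [splitG, h0', ix1, ix2, ix4, ix5, ix6]
        omega
    · have h0' : δ 0 = j + 3 := h0
      have ht' : ∀ i, δ (i+1) ≤ δ (i+2) ∧ δ (i+1) < g ⟨j, by omega⟩ := ht
      refine Xset_intro (j+2) (by omega) (by simp [splitG, h0']) ?_
      intro i
      have e : (Fin.cons a (Fin.cons (c+1) g) : Fin (k+2) → ℕ) ⟨j+2, by omega⟩ = g ⟨j, by omega⟩ := rfl
      rw [e]
      have A := ht' i
      simp [splitG, h0']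
      omega
  · intro β hβ
    obtain ⟨j, hj, h0, ht⟩ := Xset_cases hβ
    funext n
    rcases j with _ | _ | j
    · have h0' : β 0 = 0 := h0
      simp [splitF, splitG, h0']
    · have h0' : β 0 = 1 := h0
      have ht' : ∀ i, β (i+1) ≤ β (i+2) ∧ β (i+1) < c + 1 := ht
      by_cases h1 : β 1 = 0
      · rcases n with _ | _ | n
        · simp [splitF, splitG, h0', h1]
        · simp [splitF, splitG, h0', h1]
        · simp [splitF, splitG, h0', h1, ix1, ix2]
      · rcases n with _ | n
        · simp [splitF, splitG, h0', h1]
        · have B := tail_ge ht' n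
          simp [splitF, splitG, h0', h1]
          omega
    · have h0' : β 0 = j + 2 := h0
      rcases n with _ | n
      · simp [splitF, splitG, h0']
      · simp [splitF, splitG, h0']
  · intro δ hδ
    obtain ⟨j, hj, h0, ht⟩ := Xset_cases hδ
    funext n
    rcases j with _ | _ | _ | j
    · have h0' : δ 0 = 0 := h0
      simp [splitF, splitG, h0']
    · have h0' : δ 0 = 1 := h0
      rcases n with _ | n
      · simp [splitF, splitG, h0']
      · simp [splitF, splitG, h0']
    · have h0' : δ 0 = 2 := h0
      rcases n with _ | _ | n
      · simp [splitF, splitG, h0']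
      · simp [splitF, splitG, h0']
      · simp [splitF, splitG, h0', ix1, ix2]
    · have h0' : δ 0 = j + 3 := h0
      rcases n with _ | n
      · simp [splitF, splitG, h0']
      · simp [splitF, splitG, h0']


lemma absorb : ∀ (d k : ℕ) (g : Fin k → ℕ) (a b : ℕ), b = a + d + 1 →
    CB (Xset (k+2) (Fin.cons a (Fin.cons b g))) (Xset (k+1) (Fin.cons b g)) := by
  intro d
  induction d with
  | zero =>
    intro k g a b hb
    obtain rfl : b = a + 1 := by omega
    exact frontmerge k g a
  | succ d IH =>
    intro k g a b hb
    obtain rfl : b = (a + d + 1) + 1 := by omega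
    exact CB_trans (split2 k g a (a+d+1))
      (CB_trans (IH (k+1) (Fin.cons (a+d+1+1) g) a (a+d+1) rfl)
        (frontmerge k g (a+d+1)))

def permFun (k : ℕ) (σ : Equiv.Perm (Fin k)) : Baire → Baire := fun β n =>
  if n = 0 then (if h : β 0 < k then ((σ ⟨β 0, h⟩ : Fin k) : ℕ) else β 0) else β n

lemma cont_permFun (k : ℕ) (σ : Equiv.Perm (Fin k)) : Continuous (permFun k σ) := by
  apply continuous_pi; intro n
  exact cont_coord5 (fun x y z w v =>
    if n = 0 then (if h : x < k then ((σ ⟨x, h⟩ : Fin k) : ℕ) else x) else z) 0 1 n (n+1) (n-1)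

lemma perm_cb (k : ℕ) (f : Fin k → ℕ) (σ : Equiv.Perm (Fin k)) :
    CB (Xset k (f ∘ σ)) (Xset k f) := by
  apply cb_of _ _ (permFun k σ) (permFun k σ.symm) (cont_permFun k σ)
  · intro β hβ
    obtain ⟨j, hj, h0, ht⟩ := Xset_cases hβ
    refine Xset_intro ((σ ⟨j, hj⟩ : Fin k) : ℕ) (σ ⟨j, hj⟩).isLt ?_ ?_
    · simp [permFun, h0, hj]
    · intro i
      have e : f ⟨((σ ⟨j, hj⟩ : Fin k) : ℕ), (σ ⟨j, hj⟩).isLt⟩ = (f ∘ σ) ⟨j, hj⟩ := by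
        simp [Fin.eta]
      rw [e]
      simpa [permFun] using ht i
  · intro δ hδ
    obtain ⟨j, hj, h0, ht⟩ := Xset_cases hδ
    refine Xset_intro ((σ.symm ⟨j, hj⟩ : Fin k) : ℕ) (σ.symm ⟨j, hj⟩).isLt ?_ ?_
    · simp [permFun, h0, hj]
    · intro i
      have e : (f ∘ σ) ⟨((σ.symm ⟨j, hj⟩ : Fin k) : ℕ), (σ.symm ⟨j, hj⟩).isLt⟩ = f ⟨j, hj⟩ := by
        simp [Fin.eta]
      rw [e]
      simpa [permFun] using ht i
  · intro β hβ
    obtain ⟨j, hj, h0, ht⟩ := Xset_cases hβ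
    funext n
    rcases n with _ | n
    · simp [permFun, h0, hj, Fin.eta]
    · simp [permFun]
  · intro δ hδ
    obtain ⟨j, hj, h0, ht⟩ := Xset_cases hδ
    funext n
    rcases n with _ | n
    · simp [permFun, h0, hj, Fin.eta]
    · simp [permFun]

lemma main : ∀ k : ℕ, ∀ f : Fin k → ℕ, ∃ n m : ℕ, CB (Xset k f) (Xset n (fun _ => m)) := by
  intro k
  induction k using Nat.strong_induction_on with
  | _ k IH =>
    intro f
    cases k with
    | zero => exact ⟨0, 0, CB_of_eq (by simp [Xset])⟩
    | succ k0 =>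
      by_cases hall : ∀ i, f i = f 0
      · exact ⟨k0+1, f 0, CB_of_eq (by rw [show f = fun _ => f 0 from funext hall])⟩
      · push_neg at hall
        obtain ⟨i0, hi0⟩ := hall
        have hne : i0 ≠ 0 := fun h => hi0 (h ▸ rfl)
        cases k0 with
        | zero =>
          exact absurd (by have h := i0.isLt; exact Fin.ext (by omega)) hne
        | succ k' =>
          obtain ⟨p, q, hpq⟩ : ∃ p q : Fin (k'+2), f p < f q := by
            rcases lt_or_gt_of_ne hi0 with h | h
            · exact ⟨i0, 0, h⟩
            · exact ⟨0, i0, h⟩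
          have hne' : p ≠ q := fun h => by simp [h] at hpq
          set τ := Equiv.swap (0 : Fin (k'+2)) p with hτ
          set j' := τ q with hj'
          have hj'0 : j' ≠ 0 := by
            intro h
            have h2 : τ j' = q := by simp [hj', hτ, Equiv.swap_apply_self]
            rw [h] at h2
            have h3 : p = q := by simpa [hτ, Equiv.swap_apply_left] using h2
            exact hne' h3
          have h01 : (0 : Fin (k'+2)) ≠ 1 := by simp [Fin.ext_iff]
          set υ := Equiv.swap (1 : Fin (k'+2)) j' with hυ
          set σ := υ.trans τ with hσ
          have hσ0 : σ 0 = p := by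
            have hυ0 : υ 0 = 0 := Equiv.swap_apply_of_ne_of_ne h01 (Ne.symm hj'0)
            simp [hσ, Equiv.trans_apply, hυ0, hτ, Equiv.swap_apply_left]
          have hσ1 : σ 1 = q := by
            have hυ1 : υ 1 = j' := Equiv.swap_apply_left _ _
            simp [hσ, Equiv.trans_apply, hυ1, hj', hτ, Equiv.swap_apply_self]
          have step1 : CB (Xset (k'+2) f) (Xset (k'+2) (f ∘ σ)) := by
            have h := perm_cb (k'+2) (f ∘ σ) σ.symm
            have e : ((f ∘ ⇑σ) ∘ ⇑σ.symm) = f := by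
              funext x; simp
            rwa [e] at h
          set g2 : Fin k' → ℕ := fun j => (f ∘ σ) j.succ.succ with hg2
          have hdec : (f ∘ ⇑σ) = Fin.cons (f p) (Fin.cons (f q) g2) := by
            funext x
            refine Fin.cases ?_ (fun x' => ?_) x
            · simp [hσ0]
            · refine Fin.cases ?_ (fun x'' => ?_) x'
              · simp [hσ1]
              · rfl
          have step2 := absorb (f q - f p - 1) k' g2 (f p) (f q) (by omega)
          obtain ⟨n, m, step3⟩ := IH (k'+1) (by omega) (Fin.cons (f q) g2)
          refine ⟨n, m, CB_trans step1 (CB_trans ?_ step3)⟩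
          rw [hdec]
          exact step2

lemma Xeq (n m : ℕ) : Xset n (fun _ => m) = nOtimes n m := by
  ext β
  simp only [Xset, nOtimes, consSet, Set.mem_iUnion, Set.mem_setOf_eq]
  constructor
  · rintro ⟨i, h0, ht⟩
    exact ⟨i, i.isLt, h0, ht⟩
  · rintro ⟨i, hi, h0, ht⟩
    exact ⟨⟨i, hi⟩, h0, ht⟩

end ToyAux

theorem toySeq_equiv_nOtimes (k : ℕ) (s : List ℕ) (hs : s.length = k) :
    ∃ (m n : ℕ) (f : (toySeq s) → (nOtimes n m)),
      Continuous f ∧ Function.Bijective f := by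
  obtain ⟨n, m, hcb⟩ := ToyAux.main s.length s.get
  rw [ToyAux.Xeq] at hcb
  obtain ⟨f, hf, hbij⟩ := hcb
  exact ⟨m, n, f, hf, hbij⟩
end

section
/- For all m, n, p, q ≥ 1: the p-fold iterated derived set L^p(n ⊗ T_m) has exactly q elements if and only if p + 1 = m and n = q. -/
open PiNat in
lemma mem_dSet_iff {F : Set (ℕ → ℕ)} {α : ℕ → ℕ} :
    α ∈ dSet F ↔ ∀ N : ℕ, ∃ β ∈ F, (∀ i < N, β i = α i) ∧ β ≠ α := by
  constructor
  · intro h N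
    obtain ⟨β, hβF, hβU, hβne⟩ := h (cylinder α N)
      ((isOpen_cylinder (fun _ : ℕ => ℕ) α N).mem_nhds (self_mem_cylinder α N))
    exact ⟨β, hβF, fun i hi => mem_cylinder_iff.1 hβU i hi, hβne⟩
  · intro h U hU
    obtain ⟨t, ⟨x, n, rfl⟩, hαt, htU⟩ :=
      (isTopologicalBasis_cylinders (fun _ : ℕ => ℕ)).mem_nhds_iff.1 hU
    obtain ⟨β, hβF, hβ, hne⟩ := h n
    refine ⟨β, hβF, htU (mem_cylinder_iff.2 fun i hi => ?_), hne⟩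
    rw [hβ i hi]
    exact mem_cylinder_iff.1 hαt i hi

lemma dSet_eq_derivedSet (F : Set (ℕ → ℕ)) : dSet F = derivedSet F := by
  ext α
  rw [mem_derivedSet, accPt_iff_nhds]
  constructor
  · intro h U hU
    obtain ⟨β, h1, h2, h3⟩ := h U hU
    exact ⟨β, ⟨h2, h1⟩, h3⟩
  · intro h U hU
    obtain ⟨β, ⟨h2, h1⟩, h3⟩ := h U hU
    exact ⟨β, h1, h2, h3⟩

lemma dSet_union (A B : Set (ℕ → ℕ)) : dSet (A ∪ B) = dSet A ∪ dSet B := by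
  simp [dSet_eq_derivedSet, derivedSet_union]

lemma dSet_empty : dSet (∅ : Set (ℕ → ℕ)) = ∅ := by
  ext α
  simp [mem_dSet_iff]

lemma dSet_biUnion (n : ℕ) (f : ℕ → Set (ℕ → ℕ)) :
    dSet (⋃ i < n, f i) = ⋃ i < n, dSet (f i) := by
  induction n with
  | zero => simp [dSet_empty]
  | succ n ih => rw [Set.biUnion_lt_succ, dSet_union, ih, Set.biUnion_lt_succ]
/-- Prepend `i` to the sequence `γ`. -/
def consF (i : ℕ) (γ : ℕ → ℕ) : ℕ → ℕ
  | 0 => i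
  | k + 1 => γ k

lemma dSet_consSet (i : ℕ) (X : Set (ℕ → ℕ)) :
    dSet (consSet i X) = consSet i (dSet X) := by
  ext α
  rw [mem_dSet_iff]
  constructor
  · intro h
    obtain ⟨β, ⟨hβ0, _⟩, hβc, _⟩ := h 1
    have hα0 : α 0 = i := by rw [← hβc 0 one_pos, hβ0]
    refine ⟨hα0, mem_dSet_iff.2 fun N => ?_⟩
    obtain ⟨β, ⟨hβ0, hβt⟩, hβc, hβne⟩ := h (N + 1)
    refine ⟨fun k => β (k + 1), hβt, fun k hk => hβc (k + 1) (by omega), fun heq => ?_⟩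
    apply hβne
    funext j
    cases j with
    | zero => rw [hβ0, hα0]
    | succ k => exact congrFun heq k
  · rintro ⟨hα0, htail⟩
    intro N
    obtain ⟨γ, hγX, hγc, hγne⟩ := mem_dSet_iff.1 htail N
    refine ⟨consF i γ, ⟨rfl, hγX⟩, ?_, ?_⟩
    · intro j hj
      cases j with
      | zero => exact hα0.symm
      | succ k => exact hγc k (by omega)
    · intro heq
      apply hγne
      funext k
      exact congrFun heq (k + 1)

lemma toy_mono_s9 {n : ℕ} {β : ℕ → ℕ} (hβ : β ∈ toy n) : Monotone β :=
  monotone_nat_of_le_succ fun i => (hβ i).1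

lemma toy_zero : toy 0 = ∅ := by
  ext α
  simp only [toy, Set.mem_setOf_eq, Set.mem_empty_iff_false, iff_false, not_forall]
  exact ⟨0, fun h => absurd h.2 (by omega)⟩

lemma dSet_toy_s9 (m : ℕ) : dSet (toy m) = toy (m - 1) := by
  rcases m with _ | m
  · rw [toy_zero, dSet_empty, ← toy_zero]
  · simp only [Nat.add_sub_cancel]
    ext α
    rw [mem_dSet_iff]
    constructor
    · intro h
      have hmem : α ∈ toy (m + 1) := by
        intro j
        obtain ⟨β, hβ, hβc, -⟩ := h (j + 2)
        rw [← hβc j (by omega), ← hβc (j + 1) (by omega)]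
        exact hβ j
      have hne : ∀ j, α j ≠ m := by
        intro j hj
        have hconst : ∀ k, j ≤ k → α k = m := by
          intro k hk
          have h1 := toy_mono_s9 hmem hk
          have h2 := (hmem k).2
          omega
        obtain ⟨β, hβ, hβc, hβne⟩ := h (j + 1)
        apply hβne
        funext k
        by_cases hk : k ≤ j
        · exact hβc k (by omega)
        · have h1 : β j = m := by rw [hβc j (by omega)]; exact hj
          have h2 := toy_mono_s9 hβ (show j ≤ k by omega)
          have h3 := (hβ k).2
          have h4 := hconst k (by omega)
          omega
      intro j
      refine ⟨(hmem j).1, ?_⟩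
      have h1 := (hmem j).2
      have h2 := hne j
      omega
    · intro hα N
      refine ⟨fun j => if j < N then α j else m, fun j => ⟨?_, ?_⟩, fun j hj => if_pos hj, ?_⟩
      · show (if j < N then α j else m) ≤ (if j + 1 < N then α (j + 1) else m)
        by_cases h1 : j + 1 < N
        · rw [if_pos (by omega), if_pos h1]; exact (hα j).1
        · rw [if_neg h1]
          by_cases h2 : j < N
          · rw [if_pos h2]; exact le_of_lt (hα j).2
          · rw [if_neg h2]
      · show (if j < N then α j else m) < m + 1
        by_cases h2 : j < N
        · rw [if_pos h2]; have := (hα j).2; omega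
        · rw [if_neg h2]; omega
      · intro heq
        have h1 := congrFun heq N
        rw [if_neg (lt_irrefl N)] at h1
        have := (hα N).2
        omega
lemma iter_dSet_nOtimes (p n m : ℕ) :
    dSet^[p] (nOtimes n m) = ⋃ i < n, consSet i (toy (m - p)) := by
  induction p generalizing m with
  | zero => simp [nOtimes]
  | succ p ih =>
    rw [Function.iterate_succ_apply]
    have h1 : dSet (nOtimes n m) = nOtimes n (m - 1) := by
      rw [nOtimes, dSet_biUnion]
      simp only [dSet_consSet, dSet_toy_s9]
      rfl
    rw [h1, ih]
    have h2 : m - 1 - p = m - (p + 1) := by omega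
    rw [h2]

lemma toy_one : toy 1 = {fun _ => 0} := by
  ext α
  simp only [toy, Set.mem_setOf_eq, Set.mem_singleton_iff]
  constructor
  · intro h; funext i; have := (h i).2; omega
  · rintro rfl; exact fun i => ⟨le_refl 0, one_pos⟩

lemma consSet_toy_one (i : ℕ) : consSet i (toy 1) = {consF i fun _ => 0} := by
  rw [toy_one]
  ext β
  simp only [consSet, Set.mem_setOf_eq, Set.mem_singleton_iff]
  constructor
  · rintro ⟨h0, ht⟩
    funext k
    cases k with
    | zero => exact h0
    | succ j => exact congrFun ht j
  · rintro rfl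
    exact ⟨rfl, rfl⟩

lemma consF_injective : Function.Injective (fun i => consF i fun _ => 0) := by
  intro a b h
  exact congrFun h 0

lemma card_case_one (n : ℕ) :
    (⋃ i < n, consSet i (toy 1)).ncard = n := by
  have h1 : (⋃ i < n, consSet i (toy 1)) = (fun i => consF i fun _ => 0) '' ↑(Finset.range n) := by
    ext β
    simp only [consSet_toy_one, Set.mem_iUnion, Set.mem_singleton_iff, Set.mem_image,
      Finset.coe_range, Set.mem_Iio]
    constructor
    · rintro ⟨i, hi, rfl⟩; exact ⟨i, hi, rfl⟩
    · rintro ⟨i, hi, rfl⟩; exact ⟨i, hi, rfl⟩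
  rw [h1, Set.ncard_image_of_injective _ consF_injective, Set.ncard_coe_finset,
    Finset.card_range]

/-- The step sequences witnessing infiniteness of `toy (k+2)`. -/
def stepSeq (j : ℕ) : ℕ → ℕ := fun i => if i < j then 0 else 1

lemma stepSeq_mem (j k : ℕ) : stepSeq j ∈ toy (k + 2) := by
  intro i
  constructor
  · unfold stepSeq
    by_cases h : i < j
    · rw [if_pos h]; omega
    · rw [if_neg h, if_neg (by omega)]
  · unfold stepSeq
    split <;> omega

lemma stepSeq_injective : Function.Injective stepSeq := by
  intro a b h
  by_contra hab
  rcases Nat.lt_or_ge a b with hlt | hge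
  · have := congrFun h a
    simp [stepSeq, lt_irrefl, hlt] at this
  · have hlt : b < a := by omega
    have := congrFun h b
    simp [stepSeq, lt_irrefl, hlt] at this

lemma card_case_big (n k : ℕ) (hn : 1 ≤ n) :
    (⋃ i < n, consSet i (toy (k + 2))).Infinite := by
  apply Set.infinite_of_injective_forall_mem
    (f := fun j => consF 0 (stepSeq j))
  · intro a b h
    exact stepSeq_injective (funext fun i => congrFun h (i + 1))
  · intro j
    refine Set.mem_biUnion (show 0 < n from hn) ⟨rfl, stepSeq_mem j k⟩

theorem iterated_dSet_nOtimes_exact (m n p q : ℕ)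
    (hm : 1 ≤ m) (hn : 1 ≤ n) (hp : 1 ≤ p) (hq : 1 ≤ q) :
    (dSet^[p] (nOtimes n m)).ncard = q ↔ (p + 1 = m ∧ n = q) := by
  rw [iter_dSet_nOtimes]
  rcases hk : m - p with _ | _ | k
  · have hempty : (⋃ i < n, consSet i (toy 0)) = ∅ := by
      simp [toy_zero, consSet]
    rw [hempty]
    simp only [Set.ncard_empty]
    constructor
    · omega
    · rintro ⟨h1, -⟩; omega
  · rw [card_case_one]
    constructor
    · intro h; exact ⟨by omega, h⟩
    · rintro ⟨-, h⟩; exact h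
  · rw [(card_case_big n k hn).ncard]
    constructor
    · omega
    · rintro ⟨h1, -⟩; omega
end

section
/- For every α : ℕ → ℕ and every n ≥ 1, the n-fold iterated derived set L^n(T_α) is nonempty if and only if there exists i with α(i) > n. -/
/-- `T_α` for `α : ℕ → ℕ`. -/
def toyFam (α : ℕ → ℕ) : Set (ℕ → ℕ) :=
  ⋃ i : ℕ, consSet i (toy (α i))

lemma mem_nhds_cyl {β : ℕ → ℕ} {U : Set (ℕ → ℕ)} (h : U ∈ nhds β) :
    ∃ N, ∀ γ : ℕ → ℕ, (∀ j < N, γ j = β j) → γ ∈ U := by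
  obtain ⟨s, hsU, hso, hβs⟩ := mem_nhds_iff.1 h
  obtain ⟨S, ⟨x, N, rfl⟩, hβ, hsub⟩ :=
    (PiNat.isTopologicalBasis_cylinders (fun _ : ℕ => ℕ)).exists_subset_of_mem_open hβs hso
  exact ⟨N, fun γ hγ => hsU (hsub (PiNat.mem_cylinder_iff.2 fun i hi =>
    (hγ i hi).trans (PiNat.mem_cylinder_iff.1 hβ i hi)))⟩

lemma cyl_mem_nhds (β : ℕ → ℕ) (N : ℕ) : PiNat.cylinder β N ∈ nhds β :=
  (PiNat.isOpen_cylinder (fun _ : ℕ => ℕ) β N).mem_nhds (PiNat.self_mem_cylinder β N)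

/-- A monotone bounded ℕ-valued sequence is eventually constant at its max. -/
lemma eventually_const {β : ℕ → ℕ} {m : ℕ} (hmono : ∀ i, β i ≤ β (i + 1))
    (hb : ∀ i, β i < m) : ∃ N, ∀ j, β j ≤ β N ∧ (N ≤ j → β j = β N) := by
  have mono : Monotone β := monotone_nat_of_le_succ hmono
  have hbdd : BddAbove (Set.range β) := ⟨m, by rintro _ ⟨i, rfl⟩; exact (hb i).le⟩
  have hne : (Set.range β).Nonempty := ⟨β 0, 0, rfl⟩
  have hmem := Nat.sSup_mem hne hbdd
  obtain ⟨N, hN⟩ := hmem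
  refine ⟨N, fun j => ⟨?_, fun hj => le_antisymm ?_ (mono hj)⟩⟩
  · rw [hN]; exact le_csSup hbdd ⟨j, rfl⟩
  · rw [hN]; exact le_csSup hbdd ⟨j, rfl⟩

lemma dSet_toyFam (α : ℕ → ℕ) : dSet (toyFam α) = toyFam (fun i => α i - 1) := by
  ext β
  constructor
  · intro hβ
    set i := β 0 with hi0
    -- every nearby point of toyFam α with the same 0-coordinate is in consSet i (toy (α i))
    have key : ∀ N : ℕ, ∃ γ : ℕ → ℕ, γ 0 = i ∧ (fun k => γ (k + 1)) ∈ toy (α i) ∧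
        (∀ j < N, γ j = β j) ∧ γ ≠ β := by
      intro N
      obtain ⟨γ, hγF, hγU, hγne⟩ := hβ _ (cyl_mem_nhds β (max N 1))
      have hag : ∀ j < max N 1, γ j = β j := PiNat.mem_cylinder_iff.1 hγU
      obtain ⟨_, ⟨i', rfl⟩, hγ0, hγt⟩ := hγF
      have h0 : γ 0 = i := (hag 0 (lt_of_lt_of_le one_pos (le_max_right N 1)))
      rw [hγ0] at h0; subst h0
      exact ⟨γ, hγ0, hγt, fun j hj => hag j (lt_of_lt_of_le hj (le_max_left N 1)), hγne⟩
    -- tail of β is in toy (α i)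
    have htail : (fun k => β (k + 1)) ∈ toy (α i) := by
      intro k
      obtain ⟨γ, _, hγt, hag, _⟩ := key (k + 3)
      have e1 : γ (k + 1) = β (k + 1) := hag _ (by omega)
      have e2 : γ (k + 2) = β (k + 2) := hag _ (by omega)
      have h1 : γ (k + 1 + 1) ≤ γ (k + 2 + 1) := (hγt (k + 1)).1
      have h2 : γ (k + 1 + 1) < α i := (hγt (k + 1)).2
      refine ⟨?_, ?_⟩
      · show β (k + 1) ≤ β (k + 1 + 1)
        rw [← e1, ← e2]
        exact (hγt k).1
      · show β (k + 1) < α i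
        rw [← e1]
        exact (hγt k).2
    -- the eventual value is < α i - 1
    obtain ⟨N, hN⟩ := eventually_const (fun k => (htail k).1) (fun k => (htail k).2)
    have hlt : β (N + 1) < α i - 1 := by
      by_contra h
      push_neg at h
      have ht2 : β (N + 1) < α i := (htail N).2
      have hv : β (N + 1) = α i - 1 := by omega
      have hai : 1 ≤ α i := by omega
      obtain ⟨γ, hγ0, hγt, hag, hγne⟩ := key (N + 2)
      apply hγne
      funext j
      rcases lt_or_ge j (N + 2) with hj | hj
      · exact hag j hj
      · -- j ≥ N + 2 ; γ tail monotone, γ (N+1) = β (N+1) = α i - 1, γ j < α i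
        have gmono : ∀ a b, a + 1 ≤ b → γ (a + 1) ≤ γ (b + 1) := by
          intro a b hab
          have : Monotone (fun k => γ (k + 1)) := monotone_nat_of_le_succ (fun k => (hγt k).1)
          exact this (by omega)
        obtain ⟨j', rfl⟩ : ∃ j', j = j' + 1 := ⟨j - 1, by omega⟩
        have h1 : γ (N + 1) ≤ γ (j' + 1) := gmono N j' (by omega)
        have h2 : γ (j' + 1) < α i := (hγt j').2
        have h3 : γ (N + 1) = β (N + 1) := hag _ (by omega)
        have h4 : β (j' + 1) = β (N + 1) := (hN j').2 (by omega)
        omega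
    -- conclude β ∈ toyFam (α - 1)
    refine Set.mem_iUnion.2 ⟨i, hi0.symm, fun k => ⟨(htail k).1, ?_⟩⟩
    show β (k + 1) < α i - 1
    have h5 : β (k + 1) ≤ β (N + 1) := (hN k).1
    omega
  · intro hβ
    obtain ⟨_, ⟨i, rfl⟩, hβ0, hβt⟩ := hβ
    -- α i ≥ 2
    have hai : 2 ≤ α i := by
      have h2 : β (0 + 1) < α i - 1 := (hβt 0).2
      omega
    intro U hU
    obtain ⟨N0, hN0⟩ := mem_nhds_cyl hU
    set N := max N0 1 with hNdef
    refine ⟨fun j => if j < N then β j else α i - 1, ?_, ?_, ?_⟩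
    · refine Set.mem_iUnion.2 ⟨i, ?_, ?_⟩
      · simp only [Set.mem_setOf_eq]
        rw [if_pos (lt_of_lt_of_le one_pos (le_max_right N0 1))]
        exact hβ0
      · intro k
        have hm : β (k + 1) ≤ β (k + 1 + 1) := (hβt k).1
        have hb1 : β (k + 1) < α i - 1 := (hβt k).2
        have hb2 : β (k + 1 + 1) < α i - 1 := (hβt (k + 1)).2
        simp only
        constructor
        · split_ifs <;> omega
        · split_ifs <;> omega
    · exact hN0 _ (fun j hj => by simp [hNdef, lt_of_lt_of_le hj (le_max_left N0 1)])
    · intro h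
      have hc := congrFun h N
      rw [if_neg (lt_irrefl N)] at hc
      obtain ⟨N', hN'⟩ : ∃ N', N = N' + 1 := ⟨N - 1, by omega⟩
      have hb : β (N' + 1) < α i - 1 := (hβt N').2
      rw [hN'] at hc
      omega

lemma iter_dSet_toyFam (α : ℕ → ℕ) (n : ℕ) :
    dSet^[n] (toyFam α) = toyFam (fun i => α i - n) := by
  induction n with
  | zero => simp [toyFam]
  | succ n ih =>
    rw [Function.iterate_succ_apply', ih, dSet_toyFam]
    simp only [Nat.sub_sub]

lemma toyFam_nonempty (β : ℕ → ℕ) : (toyFam β).Nonempty ↔ ∃ i, 1 ≤ β i := by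
  constructor
  · rintro ⟨γ, hγ⟩
    obtain ⟨_, ⟨i, rfl⟩, _, hγt⟩ := hγ
    exact ⟨i, by have := (hγt 0).2; omega⟩
  · rintro ⟨i, hi⟩
    exact ⟨fun j => if j = 0 then i else 0,
      Set.mem_iUnion.2 ⟨i, by simp, fun k => by simp; omega⟩⟩

theorem iterated_dSet_toyFam_nonempty (α : ℕ → ℕ) (n : ℕ) (hn : 1 ≤ n) :
    (dSet^[n] (toyFam α)).Nonempty ↔ ∃ i : ℕ, α i > n := by
  rw [iter_dSet_toyFam, toyFam_nonempty]
  exact exists_congr fun i => by omega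
end

section
/- The relation ∼_V^{almost} is an equivalence relation on ℕ → ℕ: it is reflexive, symmetric, and transitive. -/
/-- `α ∼_V^{almost} β`: for every strictly increasing `ζ : ℕ → ℕ` there exists `n`
with `α (ζ n) = β (ζ n)`. -/
def vAlmost (α β : ℕ → ℕ) : Prop :=
  ∀ ζ : ℕ → ℕ, StrictMono ζ → ∃ n : ℕ, α (ζ n) = β (ζ n)

lemma vAlmost_iff_finite (α β : ℕ → ℕ) :
    vAlmost α β ↔ {k | α k ≠ β k}.Finite := by
  constructor
  · intro h
    by_contra hinf
    rw [← Set.not_infinite, not_not] at hinf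
    obtain ⟨n, hn⟩ := h (Nat.nth (fun k => α k ≠ β k)) (Nat.nth_strictMono hinf)
    exact Nat.nth_mem_of_infinite hinf n hn
  · intro hfin ζ hζ
    obtain ⟨N, hN⟩ := hfin.bddAbove
    refine ⟨N + 1, ?_⟩
    by_contra hne
    have := hN (a := ζ (N + 1)) hne
    have : N + 1 ≤ ζ (N + 1) := hζ.le_apply
    omega

theorem vAlmost_equivalence : Equivalence vAlmost := by
  constructor
  · intro α ζ _; exact ⟨0, rfl⟩
  · intro α β h ζ hζ
    obtain ⟨n, hn⟩ := h ζ hζ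
    exact ⟨n, hn.symm⟩
  · intro α β γ hab hbc
    rw [vAlmost_iff_finite] at *
    have : {k | α k ≠ γ k} ⊆ {k | α k ≠ β k} ∪ {k | β k ≠ γ k} := by
      intro k hk
      by_contra h
      simp only [Set.mem_union, Set.mem_setOf_eq, not_or, not_not] at h
      exact hk (h.1.trans h.2)
    exact ((hab.union hbc).subset this)
end

section
/- For every relation R in the class E of extensions of the Vitali equivalence relation: ∼_V ⊆ R (i.e., for all α, β, if α ∼_V β then α R β) and R ⊆ ∼_V^{¬¬} (i.e., for all α, β, if α R β then ¬¬(α ∼_V β)). -/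
/-- The Vitali relation: eventual equality. -/
def vitali (α β : ℕ → ℕ) : Prop :=
  ∃ n : ℕ, ∀ m > n, α m = β m

/-- The operation `R ↦ R⁺`. -/
def plusRel (R : (ℕ → ℕ) → (ℕ → ℕ) → Prop) : (ℕ → ℕ) → (ℕ → ℕ) → Prop :=
  fun α β => ∃ n : ℕ, ∀ m > n, α m ≠ β m → R α β

/-- The class `E` of extensions of the Vitali equivalence relation, as an
inductively defined collection of binary relations on Baire space. -/
inductive InE : ((ℕ → ℕ) → (ℕ → ℕ) → Prop) → Prop
  | vitali : InE vitali
  | plus {R} : InE R → InE (plusRel R)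
  | iUnion (R : ℕ → (ℕ → ℕ) → (ℕ → ℕ) → Prop) :
      (∀ i, InE (R i)) → InE (fun α β => ∃ i, R i α β)

theorem vitali_subset_and_subset_notnot_vitali
    (R : (ℕ → ℕ) → (ℕ → ℕ) → Prop) (hR : InE R) :
    (∀ α β : ℕ → ℕ, vitali α β → R α β) ∧
    (∀ α β : ℕ → ℕ, R α β → ¬¬ vitali α β) := by
  induction hR with
  | vitali => exact ⟨fun α β h => h, fun α β h hn => hn h⟩
  | plus hR ih =>
    refine ⟨fun α β h => ?_, fun α β h hn => ?_⟩
    · obtain ⟨n, hn⟩ := h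
      exact ⟨n, fun m hm hne => absurd (hn m hm) hne⟩
    · obtain ⟨n, hp⟩ := h
      rcases Classical.em (∃ m > n, α m ≠ β m) with ⟨m, hm, hne⟩ | hno
      · exact ih.2 α β (hp m hm hne) hn
      · exact hn ⟨n, fun m hm => by_contra fun hne => hno ⟨m, hm, hne⟩⟩
  | iUnion R hRs ih =>
    exact ⟨fun α β h => ⟨0, (ih 0).1 α β h⟩,
      fun α β ⟨i, h⟩ => (ih i).2 α β h⟩
end

section
/- For every relation R in the class E of extensions of the Vitali equivalence relation, R ⊆ ∼_V^{almost}: for all α, β, if α R β then α ∼_V^{almost} β. -/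
theorem InE_subset_vAlmost (R : (ℕ → ℕ) → (ℕ → ℕ) → Prop) (hR : InE R) :
    ∀ α β : ℕ → ℕ, R α β → vAlmost α β := by
  induction hR with
  | vitali =>
      intro α β hv ζ hζ
      obtain ⟨n, hn⟩ := hv
      exact ⟨n + 1, hn _ (lt_of_lt_of_le (Nat.lt_succ_self n) (hζ.le_apply))⟩
  | plus h ih =>
      intro α β hp ζ hζ
      obtain ⟨n, hn⟩ := hp
      by_cases heq : α (ζ (n + 1)) = β (ζ (n + 1))
      · exact ⟨n + 1, heq⟩
      · exact ih α β (hn _ (lt_of_lt_of_le (Nat.lt_succ_self n) hζ.le_apply) heq) ζ hζ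
  | iUnion R hRs ih =>
      rintro α β ⟨i, hi⟩
      exact ih i α β hi
end

section
/- Every relation R in the class E of extensions of the Vitali equivalence relation is shift-invariant: for all α, β : ℕ → ℕ, α R β if and only if (α ∘ S) R (β ∘ S), where S(n) = n + 1. -/
/-- A binary relation on Baire space is shift-invariant. -/
def ShiftInvariant (R : (ℕ → ℕ) → (ℕ → ℕ) → Prop) : Prop :=
  ∀ α β : ℕ → ℕ, R α β ↔ R (fun n => α (n + 1)) (fun n => β (n + 1))

lemma vitali_shift : ShiftInvariant vitali := by
  intro α β
  constructor
  · rintro ⟨n, h⟩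
    exact ⟨n, fun m hm => h (m + 1) (Nat.lt_succ_of_lt hm)⟩
  · rintro ⟨n, h⟩
    refine ⟨n + 1, fun m hm => ?_⟩
    obtain ⟨k, rfl⟩ := Nat.exists_eq_add_of_lt (Nat.lt_of_succ_lt hm)
    exact h (n + k) (by omega)

lemma plusRel_iff (R : (ℕ → ℕ) → (ℕ → ℕ) → Prop) (α β : ℕ → ℕ) :
    plusRel R α β ↔ vitali α β ∨ R α β := by
  constructor
  · rintro ⟨n, h⟩
    by_cases hr : R α β
    · exact Or.inr hr
    · exact Or.inl ⟨n, fun m hm => by_contra fun hne => hr (h m hm hne)⟩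
  · rintro (⟨n, h⟩ | hr)
    · exact ⟨n, fun m hm hne => absurd (h m hm) hne⟩
    · exact ⟨0, fun _ _ _ => hr⟩

theorem InE_shiftInvariant (R : (ℕ → ℕ) → (ℕ → ℕ) → Prop) (hR : InE R) :
    ShiftInvariant R := by
  induction hR with
  | vitali => exact vitali_shift
  | @plus R _ ih =>
    intro α β
    rw [plusRel_iff, plusRel_iff, ← vitali_shift α β, ← ih α β]
  | iUnion R _ ih =>
    intro α β
    exact exists_congr fun i => ih i α β
end

section
/- The relations ∼_V^{¬¬} and ∼_V^{almost} are perhapsive: (∼_V^{¬¬})⁺ ⊆ ∼_V^{¬¬} and (∼_V^{almost})⁺ ⊆ ∼_V^{almost}. -/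
/-- `α ∼_V^{¬¬} β`. -/
def vNotNot (α β : ℕ → ℕ) : Prop :=
  ¬¬ vitali α β

theorem vNotNot_and_vAlmost_perhapsive :
    (∀ α β : ℕ → ℕ, plusRel vNotNot α β → vNotNot α β) ∧
    (∀ α β : ℕ → ℕ, plusRel vAlmost α β → vAlmost α β) := by
  constructor
  · rintro α β ⟨n, hn⟩
    by_cases h : ∃ m > n, α m ≠ β m
    · obtain ⟨m, hm, hne⟩ := h
      exact hn m hm hne
    · push_neg at h
      intro hv
      exact hv ⟨n, h⟩
  · rintro α β ⟨n, hn⟩ ζ hζ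
    by_cases h : ∃ m > n, α m ≠ β m
    · obtain ⟨m, hm, hne⟩ := h
      exact hn m hm hne ζ hζ
    · push_neg at h
      exact ⟨n + 1, h _ (lt_of_lt_of_le (Nat.lt_succ_self n) (hζ.le_apply))⟩
end

section
/- For every shift-invariant binary relation R on ℕ → ℕ: R⁺ ⊆ R if and only if for all α, β : ℕ → ℕ, ((α # β) → α R β) → α R β, where α # β means ∃ n, α(n) ≠ β(n). -/
/-- The apartness relation on Baire space. -/
def apart (α β : ℕ → ℕ) : Prop :=
  ∃ n : ℕ, α n ≠ β n

lemma shiftIter (R : (ℕ → ℕ) → (ℕ → ℕ) → Prop) (hR : ShiftInvariant R) (k : ℕ) :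
    ∀ α β : ℕ → ℕ, R α β ↔ R (fun n => α (n + k)) (fun n => β (n + k)) := by
  induction k with
  | zero => simp
  | succ k ih =>
    intro α β
    rw [hR, ih]; exact Iff.rfl

theorem perhapsive_iff (R : (ℕ → ℕ) → (ℕ → ℕ) → Prop) (hR : ShiftInvariant R) :
    (∀ α β : ℕ → ℕ, plusRel R α β → R α β) ↔
    (∀ α β : ℕ → ℕ, (apart α β → R α β) → R α β) := by
  constructor
  · intro hplus α β h
    exact hplus α β ⟨0, fun m _ hne => h ⟨m, hne⟩⟩
  · intro H α β ⟨n, hn⟩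
    rw [shiftIter R hR (n + 1) α β]
    apply H
    rintro ⟨k, hk⟩
    rw [← shiftIter R hR (n + 1) α β]
    exact hn (k + (n + 1)) (by omega) hk
end
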